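/- Let a, b ∈ ℝ with b ≥ 2 and b > 2a. Then every root z ∈ ℂ, z ≠ 0, of the Kummer function Φ(a, b, ·) satisfies Re(z) > 0. -/

import Mathlib

open Complex

/-- The Kummer confluent hypergeometric function `Φ(a, b, z)`. -/
noncomputable def kummerPhi (a b z : ℂ) : ℂ :=
  ∑' k : ℕ, ((ascPochhammer ℂ k).eval a / (ascPochhammer ℂ k).eval b) * z ^ k /
    (Nat.factorial k)

/-!
`Φ = Φ(a, b, ·)` solves Kummer's equation `w Φ'' + (b - w) Φ' - a Φ = 0`, so for fixed `z` the
function `G t = exp (-t z / 2) Φ(t z)` solves `t G'' + b G' + (κ z - z² t / 4) G = 0` with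
`κ = b / 2 - a > 0`. Multiplying by `t ^ (b - 1) conj G` exhibits the equation as the derivative
of `t ^ b G' conj G`, which vanishes at `t = 0` and, when `Φ(z) = 0`, at `t = 1`. Integrating over
`[0, 1]` gives `∫ t ^ b |G'|² + z² / 4 ∫ t ^ b |G|² = κ z ∫ t ^ (b - 1) |G|²`, where the last
integral is positive because `G 0 = 1`; and `B + C z² = D z` with `B, C ≥ 0 < D` forces `Re z > 0`.
-/

open Filter

section PowerSeries

def HasInfiniteRadius (c : ℕ → ℂ) : Prop :=
  ∀ R : ℝ, 0 ≤ R → Summable fun k => ‖c k‖ * R ^ k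

noncomputable def powerSeriesSum (c : ℕ → ℂ) (z : ℂ) : ℂ := ∑' k, c k * z ^ k

def derivCoeff (c : ℕ → ℂ) (k : ℕ) : ℂ := (k + 1) * c (k + 1)

@[simp]
theorem powerSeriesSum_zero (c : ℕ → ℂ) : powerSeriesSum c 0 = c 0 := by
  rw [powerSeriesSum, tsum_eq_single 0 fun k hk => by simp [hk]]
  simp

variable {c : ℕ → ℂ}

theorem HasInfiniteRadius.of_norm_succ_le
    (h : ∀ ε > 0, ∀ᶠ k in atTop, ‖c (k + 1)‖ ≤ ε * ‖c k‖) : HasInfiniteRadius c := by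
  intro R hR
  refine summable_of_ratio_norm_eventually_le (r := 1 / 2) (by norm_num) ?_
  filter_upwards [h (1 / (2 * R + 1)) (by positivity)] with k hk
  have hR' : R / (2 * R + 1) ≤ 1 / 2 := by rw [div_le_iff₀ (by positivity)]; linarith
  simp only [norm_mul, norm_norm, norm_pow, Real.norm_of_nonneg hR]
  calc ‖c (k + 1)‖ * R ^ (k + 1) ≤ 1 / (2 * R + 1) * ‖c k‖ * R ^ (k + 1) := by gcongr
    _ = R / (2 * R + 1) * (‖c k‖ * R ^ k) := by ring
    _ ≤ 1 / 2 * (‖c k‖ * R ^ k) := by gcongr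

theorem HasInfiniteRadius.hasSum (hc : HasInfiniteRadius c) (z : ℂ) :
    HasSum (fun k => c k * z ^ k) (powerSeriesSum c z) :=
  Summable.hasSum <| .of_norm <| by simpa only [norm_mul, norm_pow] using hc ‖z‖ (norm_nonneg z)

theorem HasInfiniteRadius.derivCoeff (hc : HasInfiniteRadius c) :
    HasInfiniteRadius (derivCoeff c) := by
  intro R hR
  refine ((summable_nat_add_iff 1).mpr (hc (2 * R + 1) (by positivity))).of_nonneg_of_le
    (fun k => by positivity) fun k => ?_
  have hk : (k : ℝ) + 1 ≤ 2 ^ k := by exact_mod_cast Nat.lt_two_pow_self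
  calc ‖_root_.derivCoeff c k‖ * R ^ k = ‖c (k + 1)‖ * ((k + 1) * R ^ k) := by
        rw [_root_.derivCoeff, norm_mul, ← Nat.cast_add_one, norm_natCast]; push_cast; ring
    _ ≤ ‖c (k + 1)‖ * (2 * R + 1) ^ (k + 1) := by
        gcongr
        calc ((k : ℝ) + 1) * R ^ k ≤ 2 ^ k * R ^ k := by gcongr
          _ = (2 * R) ^ k := (mul_pow _ _ _).symm
          _ ≤ (2 * R + 1) ^ k := by gcongr; linarith
          _ ≤ (2 * R + 1) ^ (k + 1) := pow_le_pow_right₀ (by linarith) k.le_succ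

theorem HasInfiniteRadius.hasDerivAt (hc : HasInfiniteRadius c) (z : ℂ) :
    HasDerivAt (powerSeriesSum c) (powerSeriesSum (_root_.derivCoeff c) z) z := by
  unfold powerSeriesSum
  set U := Metric.ball (0 : ℂ) (‖z‖ + 1)
  have hzU : z ∈ U := by simp [U]
  have hdiff : ∀ k, DifferentiableOn ℂ (fun w => c k * w ^ k) U := fun k => by fun_prop
  have hbound : ∀ k, ∀ w ∈ U, ‖c k * w ^ k‖ ≤ ‖c k‖ * (‖z‖ + 1) ^ k := by
    intro k w hw
    rw [norm_mul, norm_pow]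
    gcongr
    exact (mem_ball_zero_iff.mp hw).le
  have hsum := hc (‖z‖ + 1) (by positivity)
  have hderiv := Complex.hasSum_deriv_of_summable_norm hsum hdiff Metric.isOpen_ball hbound hzU
  rw [← hasSum_nat_add_iff' 1] at hderiv
  have hderiv' : HasSum (fun k => _root_.derivCoeff c k * z ^ k)
      (deriv (fun w => ∑' k, c k * w ^ k) z) := by
    simpa [_root_.derivCoeff, mul_comm, mul_left_comm, mul_assoc] using hderiv
  rw [hderiv'.tsum_eq]
  exact ((Complex.differentiableOn_tsum_of_summable_norm hsum hdiff Metric.isOpen_ball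
    hbound).differentiableAt (Metric.isOpen_ball.mem_nhds hzU)).hasDerivAt

theorem HasInfiniteRadius.hasSum_mul_derivCoeff (hc : HasInfiniteRadius c) (z : ℂ) :
    HasSum (fun k => k * c k * z ^ k) (z * powerSeriesSum (_root_.derivCoeff c) z) := by
  refine (hasSum_nat_add_iff' 1).mp ?_
  have hshift : (fun k : ℕ => ((k + 1 : ℕ) : ℂ) * c (k + 1) * z ^ (k + 1)) =
      fun k => z * (_root_.derivCoeff c k * z ^ k) := by
    ext k
    simp only [_root_.derivCoeff]
    push_cast
    ring
  simp only [Finset.sum_range_one, CharP.cast_eq_zero, zero_mul, sub_zero, hshift]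
  exact (hc.derivCoeff.hasSum z).mul_left z

end PowerSeries

section Kummer

open scoped Nat

variable {a b : ℂ}

noncomputable def kummerCoeff (a b : ℂ) (k : ℕ) : ℂ :=
  (ascPochhammer ℂ k).eval a / (ascPochhammer ℂ k).eval b / k !

theorem kummerPhi_eq_powerSeriesSum (a b : ℂ) :
    kummerPhi a b = powerSeriesSum (kummerCoeff a b) :=
  funext fun _ => tsum_congr fun _ => by rw [kummerCoeff]; ring

@[simp]
theorem kummerCoeff_zero (a b : ℂ) : kummerCoeff a b 0 = 1 := by
  simp [kummerCoeff]

theorem kummerCoeff_succ (hb : ∀ k : ℕ, b + k ≠ 0) (k : ℕ) :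
    (k + 1) * (b + k) * kummerCoeff a b (k + 1) = (a + k) * kummerCoeff a b k := by
  have hP : (ascPochhammer ℂ k).eval b ≠ 0 := by
    rw [Ne, ascPochhammer_eval_eq_zero_iff]
    rintro ⟨j, -, hj⟩
    exact hb j (by rw [hj]; ring)
  have hbk := hb k
  simp only [kummerCoeff, ascPochhammer_succ_eval, Nat.factorial_succ, Nat.cast_mul]
  field_simp
  push_cast
  ring

theorem hasInfiniteRadius_kummerCoeff (hb : ∀ k : ℕ, b + k ≠ 0) :
    HasInfiniteRadius (kummerCoeff a b) := by
  refine .of_norm_succ_le fun ε hε => ?_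
  filter_upwards [eventually_ge_atTop ⌈‖b‖ + (‖a‖ + 1) / ε⌉₊] with k hk
  have hk' : ‖b‖ + (‖a‖ + 1) / ε ≤ k := Nat.ceil_le.mp hk
  have hbk : (‖a‖ + 1) / ε ≤ ‖b + k‖ := by
    have := norm_sub_le (b + k) b
    rw [add_sub_cancel_left, norm_natCast] at this
    linarith
  have hbk' : ‖a‖ + 1 ≤ ε * ‖b + k‖ := by rwa [div_le_iff₀' hε] at hbk
  have hak : ‖a + k‖ ≤ (‖a‖ + 1) * (k + 1) := by
    calc ‖a + k‖ ≤ ‖a‖ + k := by simpa using norm_add_le a k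
      _ ≤ (‖a‖ + 1) * (k + 1) := by nlinarith [norm_nonneg a, k.cast_nonneg (α := ℝ)]
  have hrec := congrArg norm (kummerCoeff_succ (a := a) hb k)
  rw [norm_mul, norm_mul, norm_mul, ← Nat.cast_add_one, norm_natCast] at hrec
  have hpos : 0 < ((k + 1 : ℕ) : ℝ) * ‖b + k‖ :=
    mul_pos (by positivity) ((by positivity : 0 < (‖a‖ + 1) / ε).trans_le hbk)
  refine le_of_mul_le_mul_left ?_ hpos
  calc ((k + 1 : ℕ) : ℝ) * ‖b + k‖ * ‖kummerCoeff a b (k + 1)‖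
      = ‖a + k‖ * ‖kummerCoeff a b k‖ := hrec
    _ ≤ (‖a‖ + 1) * (k + 1) * ‖kummerCoeff a b k‖ := by gcongr
    _ ≤ ε * ‖b + k‖ * (k + 1) * ‖kummerCoeff a b k‖ := by gcongr
    _ = ((k + 1 : ℕ) : ℝ) * ‖b + k‖ * (ε * ‖kummerCoeff a b k‖) := by push_cast; ring

theorem kummer_ode (hb : ∀ k : ℕ, b + k ≠ 0) (z : ℂ) :
    z * powerSeriesSum (derivCoeff (derivCoeff (kummerCoeff a b))) z
      + (b - z) * powerSeriesSum (derivCoeff (kummerCoeff a b)) z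
      - a * powerSeriesSum (kummerCoeff a b) z = 0 := by
  have hc := hasInfiniteRadius_kummerCoeff (a := a) hb
  have h := ((hc.derivCoeff.hasSum_mul_derivCoeff z).add
    ((hc.derivCoeff.hasSum z).mul_left b)).sub
    ((hc.hasSum_mul_derivCoeff z).add ((hc.hasSum z).mul_left a))
  have hterm : ∀ k : ℕ, k * derivCoeff (kummerCoeff a b) k * z ^ k
      + b * (derivCoeff (kummerCoeff a b) k * z ^ k)
      - (k * kummerCoeff a b k * z ^ k + a * (kummerCoeff a b k * z ^ k)) = 0 := fun k => by
    rw [derivCoeff]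
    linear_combination z ^ k * kummerCoeff_succ (a := a) hb k
  simp only [hterm] at h
  linear_combination h.unique hasSum_zero

end Kummer

open ComplexConjugate MeasureTheory

theorem HasDerivAt.comp_ofReal_mul_const {f : ℂ → ℂ} {f' z : ℂ} {t : ℝ}
    (hf : HasDerivAt f f' (t * z)) : HasDerivAt (fun s : ℝ => f (s * z)) (z * f') t :=
  ((hf.comp (t : ℂ) (hasDerivAt_mul_const z)).comp_ofReal).congr_deriv (mul_comm _ _)

theorem exists_damped_kummer_ode {a b : ℂ} (hb : ∀ k : ℕ, b + k ≠ 0) (z : ℂ) :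
    ∃ G G' G'' : ℝ → ℂ, (∀ t, HasDerivAt G (G' t) t) ∧ (∀ t, HasDerivAt G' (G'' t) t) ∧
      (∀ t : ℝ, t * G'' t + b * G' t + ((b / 2 - a) * z - z ^ 2 / 4 * t) * G t = 0) ∧
      ∀ t : ℝ, G t = exp (-(t * z) / 2) * kummerPhi a b (t * z) := by
  have hc := hasInfiniteRadius_kummerCoeff (a := a) hb
  have hode := kummer_ode (a := a) hb
  set f := powerSeriesSum (kummerCoeff a b)
  set f₁ := powerSeriesSum (derivCoeff (kummerCoeff a b))
  set f₂ := powerSeriesSum (derivCoeff (derivCoeff (kummerCoeff a b)))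
  have hexp (w : ℂ) : HasDerivAt (fun w => exp (-w / 2)) (exp (-w / 2) * (-1 / 2)) w := by
    simpa using ((hasDerivAt_id w).neg.div_const 2).cexp
  have hg (w : ℂ) : HasDerivAt (fun w => exp (-w / 2) * f w)
      (exp (-w / 2) * (f₁ w - f w / 2)) w :=
    ((hexp w).mul (hc.hasDerivAt w)).congr_deriv (by ring)
  have hg₁ (w : ℂ) : HasDerivAt (fun w => exp (-w / 2) * (f₁ w - f w / 2))
      (exp (-w / 2) * (f₂ w - f₁ w + f w / 4)) w :=
    ((hexp w).mul ((hc.derivCoeff.hasDerivAt w).fun_sub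
      ((hc.hasDerivAt w).div_const 2))).congr_deriv (by ring)
  refine ⟨fun t => exp (-(t * z) / 2) * f (t * z),
    fun t => z * (exp (-(t * z) / 2) * (f₁ (t * z) - f (t * z) / 2)),
    fun t => z * (z * (exp (-(t * z) / 2) * (f₂ (t * z) - f₁ (t * z) + f (t * z) / 4))),
    fun t => (hg _).comp_ofReal_mul_const, fun t => (hg₁ _).comp_ofReal_mul_const.const_mul z,
    fun t => ?_, fun t => by rw [kummerPhi_eq_powerSeriesSum]⟩
  linear_combination z * exp (-(t * z) / 2) * hode (t * z)

theorem hasDerivAt_rpow_mul_deriv_mul_conj_of_ode {G G' G'' : ℝ → ℂ} {b t : ℝ} {p q : ℂ}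
    (ht : 0 < t) (hG : HasDerivAt G (G' t) t) (hG' : HasDerivAt G' (G'' t) t)
    (hode : t * G'' t + b * G' t + (p - q * t) * G t = 0) :
    HasDerivAt (fun s : ℝ => ((s ^ b : ℝ) : ℂ) * (G' s * conj (G s)))
      (((t ^ b * normSq (G' t) : ℝ) : ℂ) + q * ((t ^ b * normSq (G t) : ℝ) : ℂ)
        - p * ((t ^ (b - 1) * normSq (G t) : ℝ) : ℂ)) t := by
  have hpow := (Real.hasDerivAt_rpow_const (p := b) (Or.inl ht.ne')).ofReal_comp
  refine (hpow.fun_mul (hG'.fun_mul hG.star)).congr_deriv ?_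
  have htb : ((t ^ b : ℝ) : ℂ) = ((t ^ (b - 1) : ℝ) : ℂ) * t := by
    rw [← ofReal_mul, ← Real.rpow_add_one ht.ne', sub_add_cancel]
  simp only [ofReal_mul, ← mul_conj, htb, Complex.star_def]
  linear_combination ((t ^ (b - 1) : ℝ) : ℂ) * conj (G t) * hode

theorem energy_identity_of_ode {G G' G'' : ℝ → ℂ} {b : ℝ} {p q : ℂ} (hb : 1 ≤ b)
    (hG : ∀ t, HasDerivAt G (G' t) t) (hG' : ∀ t, HasDerivAt G' (G'' t) t)
    (hode : ∀ t : ℝ, t * G'' t + b * G' t + (p - q * t) * G t = 0) (hG1 : G 1 = 0) :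
    ((∫ t in (0 : ℝ)..1, t ^ b * normSq (G' t) : ℝ) : ℂ)
      + q * ((∫ t in (0 : ℝ)..1, t ^ b * normSq (G t) : ℝ) : ℂ)
      = p * ((∫ t in (0 : ℝ)..1, t ^ (b - 1) * normSq (G t) : ℝ) : ℂ) := by
  have hGc : Continuous G := continuous_iff_continuousAt.2 fun t => (hG t).continuousAt
  have hG'c : Continuous G' := continuous_iff_continuousAt.2 fun t => (hG' t).continuousAt
  have hu : Continuous fun t : ℝ => t ^ b * normSq (G' t) :=
    (Real.continuous_rpow_const (by linarith)).mul (continuous_normSq.comp hG'c)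
  have hv : Continuous fun t : ℝ => t ^ b * normSq (G t) :=
    (Real.continuous_rpow_const (by linarith)).mul (continuous_normSq.comp hGc)
  have hw : Continuous fun t : ℝ => t ^ (b - 1) * normSq (G t) :=
    (Real.continuous_rpow_const (by linarith)).mul (continuous_normSq.comp hGc)
  have hφ : Continuous fun t : ℝ => ((t ^ b * normSq (G' t) : ℝ) : ℂ)
      + q * ((t ^ b * normSq (G t) : ℝ) : ℂ) - p * ((t ^ (b - 1) * normSq (G t) : ℝ) : ℂ) :=
    ((continuous_ofReal.comp hu).add (continuous_const.mul (continuous_ofReal.comp hv))).sub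
      (continuous_const.mul (continuous_ofReal.comp hw))
  have hFTC := intervalIntegral.integral_eq_sub_of_hasDerivAt_of_le zero_le_one
    (f := fun s : ℝ => ((s ^ b : ℝ) : ℂ) * (G' s * conj (G s)))
    ((continuous_ofReal.comp (Real.continuous_rpow_const (by linarith))).mul
      (hG'c.mul (continuous_conj.comp hGc))).continuousOn
    (fun t ht => hasDerivAt_rpow_mul_deriv_mul_conj_of_ode ht.1 (hG t) (hG' t) (hode t))
    (hφ.intervalIntegrable 0 1)
  have hint (f : ℝ → ℝ) (hf : Continuous f) :
      IntervalIntegrable (fun t => (f t : ℂ)) volume 0 1 :=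
    (continuous_ofReal.comp hf).intervalIntegrable 0 1
  rw [intervalIntegral.integral_sub ((hint _ hu).add ((hint _ hv).const_mul q))
      ((hint _ hw).const_mul p),
    intervalIntegral.integral_add (hint _ hu) ((hint _ hv).const_mul q),
    intervalIntegral.integral_const_mul, intervalIntegral.integral_const_mul,
    intervalIntegral.integral_ofReal, intervalIntegral.integral_ofReal,
    intervalIntegral.integral_ofReal] at hFTC
  simp only [hG1, map_zero, mul_zero, ofReal_zero, Real.zero_rpow (by linarith : b ≠ 0),
    zero_mul, sub_zero] at hFTC
  linear_combination hFTC

theorem integral_rpow_mul_normSq_nonneg (G : ℝ → ℂ) (r : ℝ) :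
    0 ≤ ∫ t in (0 : ℝ)..1, t ^ r * normSq (G t) :=
  intervalIntegral.integral_nonneg zero_le_one fun _ ht =>
    mul_nonneg (Real.rpow_nonneg ht.1 r) (normSq_nonneg _)

theorem integral_rpow_mul_normSq_pos {G : ℝ → ℂ} {r : ℝ} (hG : Continuous G) (hr : 0 ≤ r)
    (hG0 : G 0 ≠ 0) : 0 < ∫ t in (0 : ℝ)..1, t ^ r * normSq (G t) := by
  obtain ⟨t₀, hGt₀, ht₀⟩ := (((hG.continuousAt.eventually_ne hG0).filter_mono
    nhdsWithin_le_nhds).and (Ioc_mem_nhdsGT zero_lt_one)).exists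
  refine intervalIntegral.integral_pos zero_lt_one
    ((Real.continuous_rpow_const hr).mul (continuous_normSq.comp hG)).continuousOn
    (fun t ht => mul_nonneg (Real.rpow_nonneg ht.1.le r) (normSq_nonneg _))
    ⟨t₀, Set.Ioc_subset_Icc_self ht₀, ?_⟩
  exact mul_pos (Real.rpow_pos_of_pos ht₀.1 r) (normSq_pos.mpr hGt₀)

theorem re_pos_of_add_mul_sq_eq_mul {B C D : ℝ} {z : ℂ} (hB : 0 ≤ B) (hC : 0 ≤ C) (hD : 0 < D)
    (hz : z ≠ 0) (h : B + C * z ^ 2 = D * z) : 0 < z.re := by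
  have hre := congrArg re h
  have him := congrArg im h
  simp only [add_re, add_im, ofReal_re, ofReal_im, mul_re, mul_im, sq, zero_mul, sub_zero,
    add_zero, zero_add] at hre him
  -- the real part of `h * conj z`
  have hconj : D * normSq z = z.re * (B + C * normSq z) := by
    rw [normSq_apply]
    linear_combination -(z.re * hre + z.im * him)
  have hnorm := normSq_pos.mpr hz
  exact pos_of_mul_pos_left (hconj ▸ mul_pos hD hnorm) (by positivity)

theorem kummer_roots_right (a b : ℝ) (hb : 2 ≤ b) (hab : 2 * a < b) (z : ℂ) (hz : z ≠ 0)
    (h : kummerPhi a b z = 0) : 0 < z.re := by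
  have hbk (k : ℕ) : (b : ℂ) + k ≠ 0 := by exact_mod_cast (by positivity : (0 : ℝ) < b + k).ne'
  obtain ⟨G, G', G'', hG, hG', hode, hGdef⟩ := exists_damped_kummer_ode (a := a) hbk z
  have hGc : Continuous G := continuous_iff_continuousAt.2 fun t => (hG t).continuousAt
  have hG0 : G 0 ≠ 0 := by simp [hGdef, kummerPhi_eq_powerSeriesSum]
  have hG1 : G 1 = 0 := by simp [hGdef, h]
  have key := energy_identity_of_ode (by linarith) hG hG' hode hG1
  have hA := integral_rpow_mul_normSq_pos hGc (r := b - 1) (by linarith) hG0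
  refine re_pos_of_add_mul_sq_eq_mul (integral_rpow_mul_normSq_nonneg G' b)
    (div_nonneg (integral_rpow_mul_normSq_nonneg G b) zero_le_four)
    (mul_pos (by linarith : 0 < b / 2 - a) hA) hz ?_
  push_cast
  linear_combination key
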